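/- Let G be a connected bipartite multigraph embedded on an orientable surface of genus g, with bipartition classes V_1 and V_2 where |V_1| = 1 and every vertex of V_2 has degree at least 2. Fix k ≥ 3 and let i be the number of faces of size less than 2k. If at most one face has size 2, then i ≥ (k-1)/(k-2) - (2k/(k-2))·g + |V_2|. -/

import Mathlib

/-- A connected oriented combinatorial embedding of a (multi)graph, given by a
finite set of darts (directed edges), a rotation permutation `σ` (next dart in
the cyclic order around the tail vertex) and a fixed-point-free involution `α`
(dart reversal). -/
structure EmbGraph where
  D : Type
  finD : Finite D
  σ : Equiv.Perm D
  α : Equiv.Perm D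
  α_invol : ∀ d, α (α d) = d
  α_ne : ∀ d, α d ≠ d

namespace EmbGraph

variable (G : EmbGraph)

instance : Finite G.D := G.finD

/-- The setoid identifying darts in a common cycle of a permutation. -/
def sameCycleSetoid (f : Equiv.Perm G.D) : Setoid G.D :=
  ⟨f.SameCycle, ⟨fun _ => Equiv.Perm.SameCycle.refl f _, fun h => h.symm, fun h h' => h.trans h'⟩⟩

/-- The face permutation: the successor of the directed edge `(u,v)` in its
facial walk is the next edge after `(v,u)` in the rotation around `v`. -/
def facePerm : Equiv.Perm G.D := G.σ * G.α

/-- Vertices are the orbits of `σ`. -/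
def Vert := Quotient (G.sameCycleSetoid G.σ)
/-- Edges are the orbits of `α`. -/
def Edge := Quotient (G.sameCycleSetoid G.α)
/-- Faces are the orbits of the face permutation. -/
def Face := Quotient (G.sameCycleSetoid G.facePerm)

/-- The tail vertex of a dart. -/
def vtx (d : G.D) : G.Vert := Quotient.mk (G.sameCycleSetoid G.σ) d
def edgeOf (d : G.D) : G.Edge := Quotient.mk (G.sameCycleSetoid G.α) d
def faceOf (d : G.D) : G.Face := Quotient.mk (G.sameCycleSetoid G.facePerm) d

instance : Finite G.Vert := Quotient.finite _
instance : Finite G.Edge := Quotient.finite _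
instance : Finite G.Face := Quotient.finite _

noncomputable def numVertices : ℕ := Nat.card G.Vert
noncomputable def numEdges : ℕ := Nat.card G.Edge
noncomputable def numFaces : ℕ := Nat.card G.Face

/-- The Euler characteristic `v - e + f`; the genus `g` of the embedding is
defined by `v - e + f = 2 - 2g`. -/
noncomputable def eulerChar : ℤ := (G.numVertices : ℤ) - (G.numEdges : ℤ) + (G.numFaces : ℤ)

/-- The embedded graph is connected. -/
def Connected : Prop :=
  ∀ a b : G.D, Relation.EqvGen (fun x y => y = G.σ x ∨ y = G.α x) a b

/-- The degree of a vertex: the number of darts with this tail. -/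
noncomputable def degree (v : G.Vert) : ℕ := Nat.card {d : G.D // G.vtx d = v}

/-- The size of a face: the number of darts in its facial walk. -/
noncomputable def faceSize (f : G.Face) : ℕ := Nat.card {d : G.D // G.faceOf d = f}

/-- The underlying simple graph of the embedded graph. -/
def underlying : SimpleGraph G.Vert where
  Adj u v := u ≠ v ∧ ∃ d, G.vtx d = u ∧ G.vtx (G.α d) = v
  symm := ⟨by
    rintro u v ⟨huv, d, hd1, hd2⟩
    exact ⟨huv.symm, G.α d, hd2, by rw [G.α_invol]; exact hd1⟩⟩
  loopless := ⟨fun v h => h.1 rfl⟩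

/-- The embedded graph is a simple graph: no loops and no multiple edges. -/
def IsSimple : Prop :=
  (∀ d, G.vtx d ≠ G.vtx (G.α d)) ∧
    ∀ d d', G.vtx d = G.vtx d' → G.vtx (G.α d) = G.vtx (G.α d') → G.edgeOf d = G.edgeOf d'

/-- The dual graph: vertices are the faces of `G`, two faces being adjacent
if they share an edge. -/
def dualGraph : SimpleGraph G.Face where
  Adj f f' := f ≠ f' ∧ ∃ d, G.faceOf d = f ∧ G.faceOf (G.α d) = f'
  symm := ⟨by
    rintro f f' ⟨hff, d, hd1, hd2⟩
    exact ⟨hff.symm, G.α d, hd2, by rw [G.α_invol]; exact hd1⟩⟩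
  loopless := ⟨fun f h => h.1 rfl⟩

/-- The dual (multi)graph is simple: no face shares an edge with itself, and no
two faces share more than one edge. -/
def DualSimple : Prop :=
  (∀ d, G.faceOf d ≠ G.faceOf (G.α d)) ∧
    ∀ d d', G.faceOf d = G.faceOf d' → G.faceOf (G.α d) = G.faceOf (G.α d') →
      G.edgeOf d = G.edgeOf d'

/-- The dual embedded graph. -/
def dualMap : EmbGraph :=
  ⟨G.D, G.finD, G.σ * G.α, G.α, G.α_invol, G.α_ne⟩

/-- Identifying the angle following dart `a` with the angle following dart `b`:
the rotation is composed with the transposition of `a` and `b`. -/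
noncomputable def identifyAngles (a b : G.D) : EmbGraph :=
  letI : DecidableEq G.D := Classical.decEq _
  ⟨G.D, G.finD, G.σ * Equiv.swap a b, G.α, G.α_invol, G.α_ne⟩

/-- The H-operation applied to the edge given by the dart `d = (x,y)`, where
`x` and `y` have degree `3`.  With rotations `y,w',v` around `x` and `x,w,v'`
around `y`, it identifies the angle of `v` preceding `x` with the angle of `v'`
preceding `y`, and the angle of `w` following `y` with the angle of `w'`
following `x`, merging `v` with `v'` and `w` with `w'`. -/
noncomputable def Hop (d : G.D) : EmbGraph :=
  (G.identifyAngles (G.σ⁻¹ (G.α (G.σ (G.σ d)))) (G.σ⁻¹ (G.α (G.σ (G.σ (G.α d)))))).identifyAngles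
    (G.α (G.σ (G.α d))) (G.α (G.σ d))

end EmbGraph

/-- `S` is a vertex cut-set of `H`: deleting `S` leaves two vertices with no
path between them. -/
def IsCutSet {W : Type*} (H : SimpleGraph W) (S : Set W) : Prop :=
  ∃ a b : ↥(Sᶜ), ¬ (H.induce Sᶜ).Reachable a b

/-- `H` is `n`-connected: it has more than `n` vertices and no cut-set with
fewer than `n` vertices. -/
def KConnected {W : Type*} (n : ℕ) (H : SimpleGraph W) : Prop :=
  n < Nat.card W ∧ ∀ S : Set W, S.ncard < n → ¬ IsCutSet H S

/-- The set of genera `s` for which a simple `c`-connected embedded graph of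
genus `s` with a simple dual having a vertex cut of size `k` exists. -/
def deltaSet (k c : ℕ) : Set ℕ :=
  {s | ∃ G : EmbGraph, G.Connected ∧ G.IsSimple ∧ KConnected c G.underlying ∧
      G.eulerChar = 2 - 2 * (s : ℤ) ∧ G.DualSimple ∧
      ∃ S : Set G.Face, S.ncard = k ∧ IsCutSet G.dualGraph S}

/-- `δ_k(c)`: the minimum genus of a simple `c`-connected embedded graph whose
simple dual has a vertex cut of size `k`. -/
noncomputable def delta (k c : ℕ) : ℕ := sInf (deltaSet k c)

/-! Every edge joins `v0` to `V₂`, so the dart reversal `α` exchanges the darts at `v0` with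
those at `V₂`, and so does the face permutation `σα` on the darts of each face. Hence
`deg v0 = e`, so `e = ∑_{V₂} deg ≥ 2 |V₂|`, and all faces have even size. Weighing faces by
size, `2e ≥ 4i - 2 + 2k (f - i)`; eliminating `f` with Euler's formula and adding
`(k - 1)(e - 2|V₂|) ≥ 0` gives `(k - 2) i ≥ (k - 1) - 2kg + (k - 2)|V₂|`. -/

open Finset

theorem Nat.card_eq_sum_card_fiber {α β : Type*} [Finite α] [Fintype β] (f : α → β) :
    Nat.card α = ∑ b, Nat.card {a // f a = b} :=
  (Nat.card_congr (Equiv.sigmaFiberEquiv f).symm).trans Nat.card_sigma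

theorem Nat.card_subtype_add_card_subtype_not {α : Type*} [Finite α] (p : α → Prop) :
    Nat.card {a // p a} + Nat.card {a // ¬ p a} = Nat.card α := by
  classical
  exact Nat.card_sum.symm.trans (Nat.card_congr (Equiv.sumCompl p))

theorem Nat.card_eq_two_mul_of_perm_exchanges {α : Type*} [Finite α] (p : α → Prop)
    (e : Equiv.Perm α) (h : ∀ a, p a ↔ ¬ p (e a)) : Nat.card α = 2 * Nat.card {a // p a} := by
  have hswap : Nat.card {a // ¬ p a} = Nat.card {a // p a} :=
    Nat.card_congr (e.subtypeEquiv fun a => by rw [h a, not_not])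
  rw [← Nat.card_subtype_add_card_subtype_not p, hswap, two_mul]

theorem four_mul_card_small_add_le_sum {α : Type*} [Fintype α] (s : α → ℕ) (k : ℕ)
    (heven : ∀ a, Even (s a)) (hpos : ∀ a, 0 < s a) (h2 : Nat.card {a // s a = 2} ≤ 1) :
    4 * Nat.card {a // s a < 2 * k} + 2 * k * Nat.card {a // ¬ s a < 2 * k} ≤ ∑ a, s a + 2 := by
  classical
  have hpoint (a) :
      (if s a < 2 * k then 4 else 2 * k) ≤ s a + 2 * (if s a = 2 then 1 else 0) := by
    obtain ⟨m, hm⟩ := heven a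
    have := hpos a
    split_ifs <;> omega
  simp only [Nat.card_eq_fintype_card, Fintype.card_subtype] at h2 ⊢
  calc 4 * #{a | s a < 2 * k} + 2 * k * #{a | ¬ s a < 2 * k}
      = ∑ a, (if s a < 2 * k then 4 else 2 * k) := by
        rw [sum_ite, sum_const, sum_const, smul_eq_mul, smul_eq_mul, mul_comm 4, mul_comm (2 * k)]
    _ ≤ ∑ a, (s a + 2 * (if s a = 2 then 1 else 0)) := sum_le_sum fun a _ => hpoint a
    _ ≤ ∑ a, s a + 2 := by
        rw [sum_add_distrib, ← mul_sum, sum_boole]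
        simp only [Nat.cast_id]
        omega

namespace EmbGraph

variable (G : EmbGraph)

theorem vtx_σ (d : G.D) : G.vtx (G.σ d) = G.vtx d :=
  Quot.sound ⟨-1, by simp⟩

theorem faceOf_facePerm (d : G.D) : G.faceOf (G.facePerm d) = G.faceOf d :=
  Quot.sound ⟨-1, by simp⟩

theorem α_pow_eq_one_or_eq (n : ℕ) : G.α ^ n = 1 ∨ G.α ^ n = G.α := by
  have hsq : G.α ^ 2 = 1 := by rw [sq]; exact Equiv.ext G.α_invol
  rcases Nat.even_or_odd' n with ⟨m, rfl | rfl⟩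
  · left; rw [pow_mul, hsq, one_pow]
  · right; rw [pow_succ, pow_mul, hsq, one_pow, one_mul]

theorem edgeOf_eq_iff {d d' : G.D} : G.edgeOf d' = G.edgeOf d ↔ d' = d ∨ d' = G.α d := by
  constructor
  · intro h
    obtain ⟨n, hn⟩ := (Quotient.exact h : G.α.SameCycle d' d).exists_nat_pow_eq
    rcases G.α_pow_eq_one_or_eq n with h1 | h1 <;> rw [h1] at hn
    · exact .inl hn
    · exact .inr (hn ▸ (G.α_invol d').symm)
  · rintro (rfl | rfl)
    · rfl
    · exact Quot.sound ⟨1, by simp [G.α_invol]⟩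

theorem card_edgeOf_fiber (x : G.Edge) : Nat.card {d // G.edgeOf d = x} = 2 := by
  induction x using Quotient.ind with
  | _ d =>
    change Nat.card {d' // G.edgeOf d' = G.edgeOf d} = 2
    simp_rw [G.edgeOf_eq_iff]
    exact (Nat.card_coe_set_eq {d, G.α d}).trans (Set.ncard_pair (G.α_ne d).symm)

theorem card_darts_eq_two_mul_numEdges : Nat.card G.D = 2 * G.numEdges := by
  have := Fintype.ofFinite G.Edge
  rw [Nat.card_eq_sum_card_fiber G.edgeOf]
  simp [card_edgeOf_fiber, numEdges, mul_comm]

theorem sum_degree [Fintype G.Vert] : ∑ u, G.degree u = Nat.card G.D :=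
  (Nat.card_eq_sum_card_fiber G.vtx).symm

theorem sum_faceSize [Fintype G.Face] : ∑ f, G.faceSize f = Nat.card G.D :=
  (Nat.card_eq_sum_card_fiber G.faceOf).symm

theorem faceSize_pos (f : G.Face) : 0 < G.faceSize f := by
  induction f using Quotient.ind with
  | _ d =>
    have : Nonempty {d' // G.faceOf d' = G.faceOf d} := ⟨⟨d, rfl⟩⟩
    exact Nat.card_pos (α := {d' // G.faceOf d' = G.faceOf d})

section Star

variable {G} {v0 : G.Vert}

theorem card_darts_eq_two_mul_degree (hbip : ∀ d, G.vtx d = v0 ↔ G.vtx (G.α d) ≠ v0) :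
    Nat.card G.D = 2 * G.degree v0 :=
  Nat.card_eq_two_mul_of_perm_exchanges _ G.α hbip

theorem two_mul_numVertices_le_numEdges_add_two
    (hbip : ∀ d, G.vtx d = v0 ↔ G.vtx (G.α d) ≠ v0)
    (hdeg : ∀ u, u ≠ v0 → 2 ≤ G.degree u) :
    2 * G.numVertices ≤ G.numEdges + 2 := by
  classical
  have := Fintype.ofFinite G.Vert
  have hothers : 2 * (G.numVertices - 1) ≤ ∑ u ∈ univ.erase v0, G.degree u := by
    rw [numVertices, Nat.card_eq_fintype_card, ← card_univ, ← card_erase_of_mem (mem_univ v0),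
      mul_comm, ← smul_eq_mul]
    exact card_nsmul_le_sum _ G.degree 2 fun u hu => hdeg u (ne_of_mem_erase hu)
  have hsum : ∑ u ∈ univ.erase v0, G.degree u + G.degree v0 = Nat.card G.D := by
    rw [sum_erase_add _ _ (mem_univ v0), sum_degree]
  have hedges := G.card_darts_eq_two_mul_numEdges
  have hv0 := card_darts_eq_two_mul_degree hbip
  omega

theorem even_faceSize (hbip : ∀ d, G.vtx d = v0 ↔ G.vtx (G.α d) ≠ v0) (f : G.Face) :
    Even (G.faceSize f) := by
  let walk : Equiv.Perm {d // G.faceOf d = f} :=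
    G.facePerm.subtypePerm fun d => by rw [faceOf_facePerm]
  have hwalk (x) : G.vtx (walk x).1 = G.vtx (G.α x.1) := G.vtx_σ _
  exact even_iff_two_dvd.2 ⟨_, Nat.card_eq_two_mul_of_perm_exchanges (G.vtx ·.1 = v0) walk
    fun x => by rw [hwalk]; exact hbip x.1⟩

end Star

end EmbGraph

theorem small_faces_bound_two_general
    (G : EmbGraph)
    (v0 : G.Vert)
    (hbip : ∀ d : G.D, G.vtx d = v0 ↔ G.vtx (G.α d) ≠ v0)
    (hdeg : ∀ u : G.Vert, u ≠ v0 → 2 ≤ G.degree u)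
    (g : ℕ) (heuler : G.eulerChar = 2 - 2 * (g : ℤ))
    (k : ℕ) (hk : 3 ≤ k)
    (h2 : Nat.card {f : G.Face // G.faceSize f = 2} ≤ 1)
    (i : ℕ) (hi : i = Nat.card {f : G.Face // G.faceSize f < 2 * k}) :
    ((k : ℚ) - 1) / ((k : ℚ) - 2) - (2 * (k : ℚ) / ((k : ℚ) - 2)) * (g : ℚ)
      + ((Nat.card G.Vert : ℚ) - 1) ≤ (i : ℚ) := by
  have := Fintype.ofFinite G.Face
  set t := Nat.card {f : G.Face // ¬ G.faceSize f < 2 * k}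
  have hfaces : i + t = G.numFaces := hi ▸ Nat.card_subtype_add_card_subtype_not _
  have hweight : 4 * i + 2 * k * t ≤ 2 * G.numEdges + 2 := by
    rw [hi, ← G.card_darts_eq_two_mul_numEdges, ← G.sum_faceSize]
    exact four_mul_card_small_add_le_sum _ k (EmbGraph.even_faceSize hbip) G.faceSize_pos h2
  have hedges := EmbGraph.two_mul_numVertices_le_numEdges_add_two hbip hdeg
  rw [EmbGraph.eulerChar, ← hfaces] at heuler
  rw [← EmbGraph.numVertices]
  have hk2 : (0 : ℚ) < k - 2 := by
    rw [sub_pos]; exact_mod_cast hk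
  rw [div_mul_eq_mul_div, div_sub_div_same, div_add' _ _ _ hk2.ne', div_le_iff₀ hk2]
  have heuler' : (G.numVertices : ℚ) - G.numEdges + (i + t) = 2 - 2 * g := by
    exact_mod_cast heuler
  have hweight' : 4 * (i : ℚ) + 2 * k * t ≤ 2 * G.numEdges + 2 := by exact_mod_cast hweight
  have hedges' : 2 * (G.numVertices : ℚ) ≤ G.numEdges + 2 := by exact_mod_cast hedges
  nlinarith [mul_le_mul_of_nonneg_left hedges' (by linarith : (0 : ℚ) ≤ k - 1)]

/-- as before but with `k ≥ 3` and at most one face of size `2`: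
`i ≥ (k-1)/(k-2) - (2k/(k-2))·g + |V₂|`. -/
theorem small_faces_bound_two
    (G : EmbGraph) (hconn : G.Connected)
    (v0 : G.Vert)
    (hbip : ∀ d : G.D, G.vtx d = v0 ↔ G.vtx (G.α d) ≠ v0)
    (hdeg : ∀ u : G.Vert, u ≠ v0 → 2 ≤ G.degree u)
    (g : ℕ) (heuler : G.eulerChar = 2 - 2 * (g : ℤ))
    (k : ℕ) (hk : 3 ≤ k)
    (h2 : Nat.card {f : G.Face // G.faceSize f = 2} ≤ 1)
    (i : ℕ) (hi : i = Nat.card {f : G.Face // G.faceSize f < 2 * k}) :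
    ((k : ℚ) - 1) / ((k : ℚ) - 2) - (2 * (k : ℚ) / ((k : ℚ) - 2)) * (g : ℚ)
      + ((Nat.card G.Vert : ℚ) - 1) ≤ (i : ℚ) :=
  small_faces_bound_two_general G v0 hbip hdeg g heuler k hk h2 i hi
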